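/- Let κ be a weakly inaccessible cardinal (an uncountable regular limit cardinal), χ<κ an infinite regular cardinal, and μ=χ⁺. Suppose that every stationary subset of E^κ_{≥χ} reflects, and that there exists a stationary subset T⊆E^κ_{≥χ} that does not reflect at inaccessibles. Then there exist regular cardinals σ¹,σ⁰ with μ<σ¹<σ⁰<κ, and stationary sets S¹,S⁰⊆κ consisting of singular cardinals, such that S¹⊆E^κ_{σ¹} and S¹ does not reflect at inaccessibles, and S⁰⊆E^κ_{σ⁰} and S⁰ does not reflect at inaccessibles. -/

import Mathlib

/-!
Let `S ⊆ E^κ_{≥χ}` be stationary and non-reflecting at inaccessibles. By the reflection hypothesis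
its trace `Tr(S)` (the points where `S` reflects) is stationary, it does not reflect at
inaccessibles either, and its points have cofinality above the cofinalities of points of `S`,
because a stationary subset of `α` always contains a point of cofinality `< cf α`. On the club of
limit cardinals below `κ`, a regular point of `Tr(S)` would be weakly inaccessible, so these points
are singular cardinals and `α ↦ cf α` is regressive there; Fodor's lemma gives a stationary subset
of constant cofinality `σ`. Applying this three times, starting from `T`, yields
`χ < σ² < σ¹ < σ⁰`, and `μ = χ⁺ ≤ σ²`.
-/

namespace Paper

open Cardinal Set

/-- `α` is an accumulation point of `C`: `sup(C ∩ α) = α > 0`. -/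
def IsAccPt (C : Set Ordinal) (α : Ordinal) : Prop :=
  0 < α ∧ ∀ β < α, ∃ γ ∈ C, β < γ ∧ γ < α

/-- `C` is a club in `δ`: a closed and unbounded subset of `δ`. -/
def IsClubIn (C : Set Ordinal) (δ : Ordinal) : Prop :=
  C ⊆ Set.Iio δ ∧ (∀ α < δ, IsAccPt C α → α ∈ C) ∧ ∀ β < δ, ∃ γ ∈ C, β < γ

/-- `S` is stationary in `δ`: it meets every club in `δ`. -/
def IsStationaryIn (S : Set Ordinal) (δ : Ordinal) : Prop :=
  ∀ C, IsClubIn C δ → (S ∩ C).Nonempty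

/-- `X` has cardinality `κ`. -/
def HasSize {α : Type 1} (X : Set α) (κ : Cardinal.{0}) : Prop :=
  #X = Cardinal.lift.{1} κ

/-- An ordinal is (the ordinal of) a weakly inaccessible cardinal:
an uncountable regular limit cardinal. -/
def IsWInaccOrd (α : Ordinal) : Prop :=
  ∃ c : Cardinal, α = c.ord ∧ c.IsRegular ∧ ℵ₀ < c ∧ ∀ d < c, Order.succ d < c

/-- An ordinal is (the ordinal of) a singular cardinal. -/
def IsSingCardOrd (α : Ordinal) : Prop :=
  ∃ c : Cardinal, α = c.ord ∧ ℵ₀ ≤ c ∧ c.ord.cof < c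

universe u v

section Clubs

variable {δ : Ordinal.{u}}

/-- `α` is the supremum of an `ω`-chain `x₀ < x₁ < ⋯` with `R xₙ xₙ₊₁`, which stays below `δ`
because `cf δ > ω`. -/
theorem exists_lt_cofinally_closed (hδ : ℵ₀ < δ.cof) {R : Ordinal.{u} → Ordinal.{u} → Prop}
    (hR : ∀ x < δ, ∃ y < δ, x < y ∧ R x y) {β : Ordinal.{u}} (hβ : β < δ) :
    ∃ α, β < α ∧ α < δ ∧ ∀ x < α, ∃ y z, x < y ∧ y < z ∧ z < α ∧ R y z := by
  have hR' : ∀ x, ∃ y, x < δ → y < δ ∧ x < y ∧ R x y := fun x =>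
    if hx : x < δ then (hR x hx).imp fun _ hy _ => hy else ⟨0, fun h => absurd h hx⟩
  choose θ hθ using hR'
  have hiter : ∀ n, θ^[n] β < δ := fun n => by
    induction n with
    | zero => exact hβ
    | succ n ih => rw [Function.iterate_succ_apply']; exact (hθ _ ih).1
  have hstep : ∀ n, θ^[n] β < θ^[n + 1] β := fun n => by
    rw [Function.iterate_succ_apply']; exact (hθ _ (hiter n)).2.1
  have hlt_nfp : ∀ n, θ^[n] β < Ordinal.nfp θ β := fun n =>
    (hstep n).trans_le (Ordinal.iterate_le_nfp θ β (n + 1))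
  refine ⟨Ordinal.nfp θ β, hlt_nfp 0, Ordinal.nfp_lt_ord hδ (fun x hx => (hθ x hx).1) hβ,
    fun x hx => ?_⟩
  obtain ⟨n, hn⟩ := Ordinal.lt_nfp_iff.1 hx
  refine ⟨θ^[n] β, θ^[n + 1] β, hn, hstep n, hlt_nfp (n + 1), ?_⟩
  rw [Function.iterate_succ_apply']
  exact (hθ _ (hiter n)).2.2

theorem IsAccPt.mono {C D : Set Ordinal} {α : Ordinal} (h : IsAccPt C α) (hCD : C ⊆ D) :
    IsAccPt D α :=
  ⟨h.1, fun β hβ => (h.2 β hβ).imp fun _ ⟨hγ, hlt⟩ => ⟨hCD hγ, hlt⟩⟩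

theorem IsClubIn.mem_of_isAccPt {C : Set Ordinal} (hC : IsClubIn C δ) {α : Ordinal}
    (hα : α < δ) (hacc : IsAccPt C α) : α ∈ C :=
  hC.2.1 α hα hacc

theorem isClubIn_Ioo (hδ : Order.IsSuccLimit δ) {β : Ordinal} (hβ : β < δ) :
    IsClubIn (Ioi β ∩ Iio δ) δ := by
  refine ⟨inter_subset_right, fun α hα ⟨hpos, hacc⟩ => ?_, fun b hb => ?_⟩
  · obtain ⟨γ, hγ, -, hγα⟩ := hacc 0 hpos
    exact ⟨hγ.1.trans hγα, hα⟩
  · exact ⟨Order.succ (max b β), ⟨(le_max_right b β).trans_lt (Order.lt_succ _),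
      hδ.succ_lt (max_lt hb hβ)⟩, (le_max_left b β).trans_lt (Order.lt_succ _)⟩

theorem IsStationaryIn.mono {S T : Set Ordinal} (hS : IsStationaryIn S δ) (hST : S ⊆ T) :
    IsStationaryIn T δ :=
  fun C hC => (hS C hC).mono (inter_subset_inter_left C hST)

theorem IsStationaryIn.isAccPt {S : Set Ordinal} (hS : IsStationaryIn S δ)
    (hδ : Order.IsSuccLimit δ) : IsAccPt S δ := by
  refine ⟨hδ.bot_lt, fun β hβ => ?_⟩
  obtain ⟨γ, hγS, hβγ, hγδ⟩ := hS _ (isClubIn_Ioo hδ hβ)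
  exact ⟨γ, hγS, hβγ, hγδ⟩

theorem IsStationaryIn.exists_mem_lt {S : Set Ordinal} (hS : IsStationaryIn S δ)
    (hδ : Order.IsSuccLimit δ) : ∃ α ∈ S, α < δ := by
  obtain ⟨α, hαS, -, hαδ⟩ := hS.isAccPt hδ |>.2 0 hδ.bot_lt
  exact ⟨α, hαS, hαδ⟩

def accPtsIn (C : Set Ordinal) (δ : Ordinal) : Set Ordinal := {α | α < δ ∧ IsAccPt C α}

theorem isClubIn_accPtsIn (hδ : ℵ₀ < δ.cof) {C : Set Ordinal} (hCδ : C ⊆ Iio δ)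
    (hunb : ∀ β < δ, ∃ γ ∈ C, β < γ) : IsClubIn (accPtsIn C δ) δ := by
  refine ⟨fun α hα => hα.1, fun α hα hacc => ⟨hα, hacc.1, fun β hβ => ?_⟩, fun β hβ => ?_⟩
  · obtain ⟨γ, hγ, hβγ, hγα⟩ := hacc.2 β hβ
    obtain ⟨c, hc, hγc, hcα⟩ := hγ.2.2 β hβγ
    exact ⟨c, hc, hγc, hcα.trans hγα⟩
  · have hR : ∀ x < δ, ∃ y < δ, x < y ∧ y ∈ C := fun x hx => by
      obtain ⟨y, hy, hxy⟩ := hunb x hx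
      exact ⟨y, hCδ hy, hxy, hy⟩
    obtain ⟨α, hβα, hαδ, hα⟩ := exists_lt_cofinally_closed hδ hR hβ
    refine ⟨α, ⟨hαδ, hβα.pos, fun x hx => ?_⟩, hβα⟩
    obtain ⟨y, z, hxy, hyz, hzα, hz⟩ := hα x hx
    exact ⟨z, hz, hxy.trans hyz, hzα⟩

theorem IsClubIn.inter (hδ : ℵ₀ < δ.cof) {C D : Set Ordinal} (hC : IsClubIn C δ)
    (hD : IsClubIn D δ) : IsClubIn (C ∩ D) δ := by
  have hlim : Order.IsSuccLimit δ := Ordinal.one_lt_cof_iff.1 (one_lt_aleph0.trans hδ)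
  refine ⟨fun α hα => hC.1 hα.1, fun α hα hacc => ?_, fun β hβ => ?_⟩
  · exact ⟨hC.mem_of_isAccPt hα (hacc.mono inter_subset_left),
      hD.mem_of_isAccPt hα (hacc.mono inter_subset_right)⟩
  · have hR : ∀ x < δ, ∃ y < δ, x < y ∧ (∃ c ∈ C, x < c ∧ c < y) ∧ ∃ d ∈ D, x < d ∧ d < y :=
      fun x hx => by
        obtain ⟨c, hc, hxc⟩ := hC.2.2 x hx
        obtain ⟨d, hd, hxd⟩ := hD.2.2 x hx
        have hcd : max c d < δ := max_lt (hC.1 hc) (hD.1 hd)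
        refine ⟨Order.succ (max c d), hlim.succ_lt hcd, ?_, ⟨c, hc, hxc, ?_⟩, ⟨d, hd, hxd, ?_⟩⟩
        · exact hxc.trans_le ((le_max_left c d).trans (Order.le_succ _))
        · exact (le_max_left c d).trans_lt (Order.lt_succ _)
        · exact (le_max_right c d).trans_lt (Order.lt_succ _)
    obtain ⟨α, hβα, hαδ, hα⟩ := exists_lt_cofinally_closed hδ hR hβ
    refine ⟨α, ⟨hC.mem_of_isAccPt hαδ ⟨hβα.pos, fun x hx => ?_⟩,
      hD.mem_of_isAccPt hαδ ⟨hβα.pos, fun x hx => ?_⟩⟩, hβα⟩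
    · obtain ⟨y, z, hxy, -, hzα, ⟨c, hc, hyc, hcz⟩, -⟩ := hα x hx
      exact ⟨c, hc, hxy.trans hyc, hcz.trans hzα⟩
    · obtain ⟨y, z, hxy, -, hzα, -, d, hd, hyd, hdz⟩ := hα x hx
      exact ⟨d, hd, hxy.trans hyd, hdz.trans hzα⟩

theorem IsStationaryIn.inter_club (hδ : ℵ₀ < δ.cof) {S C : Set Ordinal}
    (hS : IsStationaryIn S δ) (hC : IsClubIn C δ) : IsStationaryIn (S ∩ C) δ := fun D hD => by
  obtain ⟨x, hxS, hxC, hxD⟩ := hS (C ∩ D) (hC.inter hδ hD)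
  exact ⟨x, ⟨hxS, hxC⟩, hxD⟩

theorem IsClubIn.inter_Iio {C : Set Ordinal} (hC : IsClubIn C δ) {α : Ordinal}
    (hαδ : α < δ) (hα : IsAccPt C α) : IsClubIn (C ∩ Iio α) α := by
  refine ⟨inter_subset_right, fun β hβ hacc => ⟨?_, hβ⟩, fun β hβ => ?_⟩
  · exact hC.mem_of_isAccPt (hβ.trans hαδ) (hacc.mono inter_subset_left)
  · obtain ⟨γ, hγ, hβγ, hγα⟩ := hα.2 β hβ
    exact ⟨γ, ⟨hγ, hγα⟩, hβγ⟩

end Clubs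

section Fodor

variable {κ : Cardinal.{u}}

theorem isClubIn_diagInter (hreg : κ.IsRegular) (hunc : ℵ₀ < κ)
    {C : Ordinal.{u} → Set Ordinal.{u}} (hC : ∀ γ, IsClubIn (C γ) κ.ord) :
    IsClubIn {α | α < κ.ord ∧ ∀ γ < α, α ∈ C γ} κ.ord := by
  have hδ : ℵ₀ < κ.ord.cof := by rwa [hreg.cof_ord]
  have hlim : Order.IsSuccLimit κ.ord := Cardinal.isSuccLimit_ord hreg.aleph0_le
  refine ⟨fun α hα => hα.1, fun α hα hacc => ⟨hα, fun γ hγ => ?_⟩, fun β hβ => ?_⟩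
  · refine (hC γ).mem_of_isAccPt hα ⟨hacc.1, fun β hβ => ?_⟩
    obtain ⟨d, hd, hβγd, hdα⟩ := hacc.2 (max β γ) (max_lt hβ hγ)
    exact ⟨d, hd.2 γ ((le_max_right β γ).trans_lt hβγd), (le_max_left β γ).trans_lt hβγd, hdα⟩
  · have hR : ∀ x < κ.ord, ∃ y < κ.ord, x < y ∧ ∀ γ < x, ∃ c ∈ C γ, x < c ∧ c < y := by
      intro x hx
      choose c hc hxc using fun γ : Iio x => (hC γ).2.2 x hx
      -- a supremum of `|x| < κ = cf κ` ordinals below `κ`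
      have hsup : ⨆ γ, c γ < κ.ord := by
        apply Ordinal.lift_iSup_lt_of_lt_cof _ fun γ : Iio x => (hC γ).1 (hc γ)
        rwa [← Ordinal.lift_cof, hreg.cof_ord, mk_Iio_ordinal, lift_lift, lift_lt, ← lt_ord]
      refine ⟨Order.succ (max x (⨆ γ, c γ)), hlim.succ_lt (max_lt hx hsup),
        (le_max_left _ _).trans_lt (Order.lt_succ _),
        fun γ hγ => ⟨c ⟨γ, hγ⟩, hc ⟨γ, hγ⟩, hxc ⟨γ, hγ⟩, ?_⟩⟩
      exact ((Ordinal.le_iSup c ⟨γ, hγ⟩).trans (le_max_right _ _)).trans_lt (Order.lt_succ _)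
    obtain ⟨α, hβα, hαδ, hα⟩ := exists_lt_cofinally_closed hδ hR hβ
    refine ⟨α, ⟨hαδ, fun γ hγ => (hC γ).mem_of_isAccPt hαδ ⟨hβα.pos, fun x hx => ?_⟩⟩, hβα⟩
    obtain ⟨y, z, hxy, -, hzα, hyz⟩ := hα (max x γ) (max_lt hx hγ)
    obtain ⟨c, hc, hyc, hcz⟩ := hyz γ ((le_max_right x γ).trans_lt hxy)
    exact ⟨c, hc, (le_max_left x γ).trans_lt (hxy.trans hyc), hcz.trans hzα⟩

theorem IsStationaryIn.fodor (hreg : κ.IsRegular) (hunc : ℵ₀ < κ) {S : Set Ordinal.{u}}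
    (hS : IsStationaryIn S κ.ord) {f : Ordinal.{u} → Ordinal.{u}} (hf : ∀ α ∈ S, f α < α) :
    ∃ γ, IsStationaryIn (S ∩ {α | f α = γ}) κ.ord := by
  by_contra! h
  simp only [IsStationaryIn, not_forall, not_nonempty_iff_eq_empty] at h
  choose C hC hdisj using h
  obtain ⟨α, hαS, -, hα⟩ := hS _ (isClubIn_diagInter hreg hunc hC)
  exact (hdisj (f α)).subset ⟨⟨hαS, rfl⟩, hα (f α) (hf α hαS)⟩

end Fodor

section Cofinality

theorem lift_cof_le_of_range_cofinal {ι : Type v} {γ : Ordinal.{u}} {g : ι → Ordinal.{u}}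
    (hg : ∀ i, g i < γ) (hunb : ∀ β < γ, ∃ i, β < g i) :
    Cardinal.lift.{v} γ.cof ≤ Cardinal.lift.{u} #ι := by
  by_contra! h
  rw [Ordinal.lift_cof] at h
  obtain ⟨i, hi⟩ := hunb _ (Ordinal.lift_iSup_lt_of_lt_cof h hg)
  exact hi.not_ge (le_ciSup ⟨γ, forall_mem_range.2 fun i => (hg i).le⟩ i)

/-- The accumulation points of a fundamental sequence of `α` form a club in `α`, and each of them
is the supremum of an initial segment of the sequence, of length `< cf α`. -/
theorem IsStationaryIn.exists_cof_lt {α : Ordinal.{u}} (hα : ℵ₀ < α.cof) {S : Set Ordinal.{u}}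
    (hS : IsStationaryIn S α) : ∃ γ ∈ S, γ.cof < α.cof := by
  have hlim : Order.IsSuccLimit α := Ordinal.one_lt_cof_iff.1 (one_lt_aleph0.trans hα)
  obtain ⟨f, hf⟩ := Ordinal.exists_isFundamentalSeq (o := α) rfl
  have hfcof : ∀ β < α, ∃ i, β ≤ (f i).1 := fun β hβ => by
    obtain ⟨_, ⟨i, rfl⟩, hi⟩ := hf.isCofinal_range ⟨β, hβ⟩
    exact ⟨i, hi⟩
  have hRunb : ∀ β < α, ∃ r ∈ range fun i => (f i).1, β < r := fun β hβ => by
    obtain ⟨i, hi⟩ := hfcof _ (hlim.succ_lt hβ)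
    exact ⟨_, ⟨i, rfl⟩, (Order.lt_succ β).trans_le hi⟩
  obtain ⟨γ, hγS, hγα, hγacc⟩ :=
    hS _ (isClubIn_accPtsIn hα (by rintro _ ⟨i, rfl⟩; exact (f i).2) hRunb)
  obtain ⟨i₁, hγi₁, hmin⟩ := wellFounded_lt.has_min {i | γ ≤ (f i).1} (hfcof γ hγα)
  have hj : ∀ j : Iio i₁.1, j.1 < α.cof.ord := fun j => lt_trans j.2 i₁.2
  have hbelow : ∀ j : Iio i₁.1, (f ⟨j, hj j⟩).1 < γ :=
    fun j => not_le.1 fun h => hmin _ h j.2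
  have hunb : ∀ β < γ, ∃ j : Iio i₁.1, β < (f ⟨j, hj j⟩).1 := fun β hβ => by
    obtain ⟨_, ⟨i, rfl⟩, hβi, hiγ⟩ := hγacc.2 β hβ
    exact ⟨⟨i, hf.strictMono.lt_iff_lt.1 (hiγ.trans_le hγi₁)⟩, hβi⟩
  have hcof := lift_cof_le_of_range_cofinal hbelow hunb
  rw [mk_Iio_ordinal, lift_lift, lift_le] at hcof
  exact ⟨γ, hγS, hcof.trans_lt (lt_ord.1 i₁.2)⟩

end Cofinality

section Reflection

def trace (S : Set Ordinal) (δ : Ordinal) : Set Ordinal :=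
  {α | α < δ ∧ ℵ₀ < α.cof ∧ IsStationaryIn (S ∩ Iio α) α}

def IsNonreflectingAtInacc (S : Set Ordinal) (δ : Ordinal) : Prop :=
  ∀ α < δ, IsWInaccOrd α → ¬ IsStationaryIn (S ∩ Iio α) α

variable {δ : Ordinal.{u}}

theorem trace_mono {S T : Set Ordinal} (h : S ⊆ T) : trace S δ ⊆ trace T δ :=
  fun _ ⟨hαδ, hα, hst⟩ => ⟨hαδ, hα, hst.mono (inter_subset_inter_left _ h)⟩

theorem isStationaryIn_trace {S : Set Ordinal}
    (hrefl : ∀ C, IsClubIn C δ → (trace (S ∩ C) δ).Nonempty) :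
    IsStationaryIn (trace S δ) δ := fun C hC => by
  obtain ⟨α, hα⟩ := hrefl C hC
  have hαlim : Order.IsSuccLimit α := Ordinal.one_lt_cof_iff.1 (one_lt_aleph0.trans hα.2.1)
  refine ⟨α, trace_mono inter_subset_left hα, hC.mem_of_isAccPt hα.1 ?_⟩
  exact (hα.2.2.isAccPt hαlim).mono fun _ hx => hx.1.2

theorem IsStationaryIn.of_trace {S T : Set Ordinal} {α : Ordinal} (hα : ℵ₀ < α.cof)
    (hT : IsStationaryIn T α) (hTS : ∀ x ∈ T, IsStationaryIn (S ∩ Iio x) x) :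
    IsStationaryIn (S ∩ Iio α) α := fun C hC => by
  obtain ⟨x, hxT, hxα, hxC⟩ := hT _ (isClubIn_accPtsIn hα hC.1 hC.2.2)
  obtain ⟨s, ⟨hsS, hsx⟩, hsC, -⟩ := hTS x hxT _ (hC.inter_Iio hxα hxC)
  exact ⟨s, ⟨hsS, hsx.trans hxα⟩, hsC⟩

theorem IsWInaccOrd.aleph0_lt_cof {α : Ordinal} (h : IsWInaccOrd α) : ℵ₀ < α.cof := by
  obtain ⟨c, rfl, hreg, hunc, -⟩ := h
  rwa [hreg.cof_ord]

theorem IsNonreflectingAtInacc.of_subset_trace {S T : Set Ordinal}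
    (hS : IsNonreflectingAtInacc S δ) (hT : T ⊆ trace S δ) : IsNonreflectingAtInacc T δ :=
  fun α hαδ hα hst => hS α hαδ hα (hst.of_trace hα.aleph0_lt_cof fun _ hx => (hT hx.1).2.2)

end Reflection

section LimitCardinals

variable {δ : Ordinal.{u}}

def limitCardinalsBelow (δ : Ordinal) : Set Ordinal :=
  {β | β < δ ∧ ∀ c : Cardinal, c.ord < β → (Order.succ c).ord < β}

theorem ord_card_of_mem_limitCardinalsBelow {β : Ordinal} (hβ : β ∈ limitCardinalsBelow δ) :
    β.card.ord = β :=
  (ord_card_le β).antisymm <| not_lt.1 fun h =>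
    (Order.lt_succ β.card).not_ge (ord_le.1 (hβ.2 _ h).le)

theorem isClubIn_limitCardinalsBelow {κ : Cardinal.{u}} (hκ : ℵ₀ < κ.ord.cof)
    (hlim : ∀ d < κ, Order.succ d < κ) : IsClubIn (limitCardinalsBelow κ.ord) κ.ord := by
  refine ⟨fun β hβ => hβ.1, fun α hα hacc => ⟨hα, fun c hc => ?_⟩, fun β hβ => ?_⟩
  · obtain ⟨γ, hγ, hcγ, hγα⟩ := hacc.2 _ hc
    exact (hγ.2 c hcγ).trans hγα
  · have hR : ∀ x < κ.ord, ∃ y < κ.ord, x < y ∧ (Order.succ x.card).ord ≤ y := fun x hx =>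
      ⟨_, ord_lt_ord.2 (hlim _ (lt_ord.1 hx)), lt_ord.2 (Order.lt_succ _), le_rfl⟩
    obtain ⟨α, hβα, hακ, hα⟩ := exists_lt_cofinally_closed hκ hR hβ
    refine ⟨α, ⟨hακ, fun c hc => ?_⟩, hβα⟩
    obtain ⟨y, z, hcy, -, hzα, hyz⟩ := hα _ hc
    exact (ord_le_ord.2 (Order.succ_le_succ (ord_le.1 hcy.le))).trans_lt (hyz.trans_lt hzα)

theorem isWInaccOrd_of_mem_limitCardinalsBelow {α : Ordinal} (hα : α ∈ limitCardinalsBelow δ)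
    (hcof : ℵ₀ < α.cof) (hreg : α.cof.ord = α) : IsWInaccOrd α := by
  refine ⟨α.cof, hreg.symm, isRegular_cof (Ordinal.one_lt_cof_iff.1 (one_lt_aleph0.trans hcof)),
    hcof, fun d hd => ?_⟩
  rw [← ord_lt_ord, hreg] at hd ⊢
  exact hα.2 d hd

theorem isSingCardOrd_of_mem_limitCardinalsBelow {α : Ordinal} (hα : α ∈ limitCardinalsBelow δ)
    (hcof : ℵ₀ ≤ α.cof) (hsing : α.cof.ord < α) : IsSingCardOrd α := by
  have hcard := ord_card_of_mem_limitCardinalsBelow hα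
  refine ⟨α.card, hcard.symm, hcof.trans (Ordinal.cof_le_card α), ?_⟩
  rwa [hcard, ← ord_lt_ord, hcard]

end LimitCardinals

theorem exists_stationary_singular_of_reflection {κ χ ρ : Cardinal.{u}} (hreg : κ.IsRegular)
    (hunc : ℵ₀ < κ) (hlim : ∀ d < κ, Order.succ d < κ)
    (hrefl : ∀ S ⊆ {α : Ordinal | α < κ.ord ∧ χ ≤ α.cof},
      IsStationaryIn S κ.ord → (trace S κ.ord).Nonempty)
    (hχρ : χ ≤ ρ) {S : Set Ordinal} (hS : S ⊆ {α | α < κ.ord ∧ ρ ≤ α.cof})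
    (hSst : IsStationaryIn S κ.ord) (hSnr : IsNonreflectingAtInacc S κ.ord) :
    ∃ σ : Cardinal, σ.IsRegular ∧ ρ < σ ∧ σ < κ ∧ ∃ S' ⊆ {α | α < κ.ord ∧ α.cof = σ},
      IsStationaryIn S' κ.ord ∧ (∀ α ∈ S', IsSingCardOrd α) ∧ IsNonreflectingAtInacc S' κ.ord := by
  have hκ : ℵ₀ < κ.ord.cof := by rwa [hreg.cof_ord]
  have hκlim : Order.IsSuccLimit κ.ord := isSuccLimit_ord hreg.aleph0_le
  set T := trace S κ.ord ∩ limitCardinalsBelow κ.ord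
  have hTst : IsStationaryIn T κ.ord := by
    refine (isStationaryIn_trace fun C hC => ?_).inter_club hκ
      (isClubIn_limitCardinalsBelow hκ hlim)
    exact hrefl _ (fun α hα => ⟨(hS hα.1).1, hχρ.trans (hS hα.1).2⟩) (hSst.inter_club hκ hC)
  -- a regular point of `T` would be weakly inaccessible, and `S` reflects there
  have hTsing : ∀ α ∈ T, α.cof.ord < α := fun α ⟨hαtr, hαL⟩ =>
    (Ordinal.ord_cof_le α).lt_of_ne fun h =>
      hSnr α hαtr.1 (isWInaccOrd_of_mem_limitCardinalsBelow hαL hαtr.2.1 h) hαtr.2.2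
  obtain ⟨γ, hγ⟩ := hTst.fodor hreg hunc hTsing
  set S' := T ∩ {α | α.cof.ord = γ}
  obtain ⟨α, hαS', hακ⟩ := hγ.exists_mem_lt hκlim
  have hαtr := hαS'.1.1
  obtain ⟨β, ⟨hβS, -⟩, hβα⟩ := hαtr.2.2.exists_cof_lt hαtr.2.1
  refine ⟨α.cof, isRegular_cof (Ordinal.one_lt_cof_iff.1 (one_lt_aleph0.trans hαtr.2.1)),
    (hS hβS).2.trans_lt hβα, (Ordinal.cof_le_card α).trans_lt (lt_ord.1 hακ), S',
    fun α' hα' => ⟨hα'.1.1.1, ord_injective (hα'.2.trans hαS'.2.symm)⟩, hγ,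
    fun α' hα' => ?_, hSnr.of_subset_trace fun _ hα' => hα'.1.1⟩
  exact isSingCardOrd_of_mem_limitCardinalsBelow hα'.1.2 hα'.1.1.2.1.le (hTsing α' hα'.1)

theorem stmt18_general (κ χ μ : Cardinal) (hreg : κ.IsRegular) (hunc : ℵ₀ < κ)
    (hlim : ∀ d < κ, Order.succ d < κ)
    (hμ : μ = Order.succ χ)
    (hrefl : ∀ S ⊆ {α : Ordinal | α < κ.ord ∧ χ ≤ α.cof},
      IsStationaryIn S κ.ord →
      ∃ α < κ.ord, ℵ₀ < α.cof ∧ IsStationaryIn (S ∩ Set.Iio α) α)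
    (hT : ∃ T ⊆ {α : Ordinal | α < κ.ord ∧ χ ≤ α.cof},
      IsStationaryIn T κ.ord ∧
      ∀ α < κ.ord, IsWInaccOrd α → ¬ IsStationaryIn (T ∩ Set.Iio α) α) :
    ∃ σ1 σ0 : Cardinal, σ1.IsRegular ∧ σ0.IsRegular ∧
      μ < σ1 ∧ σ1 < σ0 ∧ σ0 < κ ∧
      (∃ S1 ⊆ {α : Ordinal | α < κ.ord ∧ α.cof = σ1},
        IsStationaryIn S1 κ.ord ∧ (∀ δ ∈ S1, IsSingCardOrd δ) ∧
        ∀ α < κ.ord, IsWInaccOrd α → ¬ IsStationaryIn (S1 ∩ Set.Iio α) α) ∧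
      (∃ S0 ⊆ {α : Ordinal | α < κ.ord ∧ α.cof = σ0},
        IsStationaryIn S0 κ.ord ∧ (∀ δ ∈ S0, IsSingCardOrd δ) ∧
        ∀ α < κ.ord, IsWInaccOrd α → ¬ IsStationaryIn (S0 ∩ Set.Iio α) α) := by
  have step {ρ : Cardinal} :=
    exists_stationary_singular_of_reflection (ρ := ρ) hreg hunc hlim hrefl
  have cof_ge {σ : Cardinal} {S : Set Ordinal} (h : S ⊆ {α | α < κ.ord ∧ α.cof = σ}) :
      S ⊆ {α | α < κ.ord ∧ σ ≤ α.cof} := fun _ hα => ⟨(h hα).1, (h hα).2.ge⟩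
  obtain ⟨T, hTsub, hTst, hTnr⟩ := hT
  obtain ⟨σ, -, hχσ, -, S, hS, hSst, -, hSnr⟩ := step le_rfl hTsub hTst hTnr
  obtain ⟨σ1, hσ1, hσσ1, -, S1, hS1, hS1st, hS1sing, hS1nr⟩ :=
    step hχσ.le (cof_ge hS) hSst hSnr
  obtain ⟨σ0, hσ0, hσ1σ0, hσ0κ, S0, hS0, hS0st, hS0sing, hS0nr⟩ :=
    step (hχσ.le.trans hσσ1.le) (cof_ge hS1) hS1st hS1nr
  exact ⟨σ1, σ0, hσ1, hσ0, hμ ▸ (Order.succ_le_of_lt hχσ).trans_lt hσσ1, hσ1σ0, hσ0κ,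
    ⟨S1, hS1, hS1st, hS1sing, hS1nr⟩, ⟨S0, hS0, hS0st, hS0sing, hS0nr⟩⟩

/-- Lemma 7.1: if `κ` is weakly inaccessible, every stationary subset of `E^κ_{≥χ}` reflects,
and some stationary `T ⊆ E^κ_{≥χ}` does not reflect at inaccessibles, then there are regular
`σ¹, σ⁰` with `μ < σ¹ < σ⁰ < κ` and stationary sets `S¹ ⊆ E^κ_{σ¹}`, `S⁰ ⊆ E^κ_{σ⁰}`
consisting of singular cardinals, neither of which reflects at inaccessibles. -/
theorem stmt18 (κ χ μ : Cardinal) (hreg : κ.IsRegular) (hunc : ℵ₀ < κ)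
    (hlim : ∀ d < κ, Order.succ d < κ)
    (hχ : χ.IsRegular) (hχκ : χ < κ) (hμ : μ = Order.succ χ)
    (hrefl : ∀ S ⊆ {α : Ordinal | α < κ.ord ∧ χ ≤ α.cof},
      IsStationaryIn S κ.ord →
      ∃ α < κ.ord, ℵ₀ < α.cof ∧ IsStationaryIn (S ∩ Set.Iio α) α)
    (hT : ∃ T ⊆ {α : Ordinal | α < κ.ord ∧ χ ≤ α.cof},
      IsStationaryIn T κ.ord ∧
      ∀ α < κ.ord, IsWInaccOrd α → ¬ IsStationaryIn (T ∩ Set.Iio α) α) :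
    ∃ σ1 σ0 : Cardinal, σ1.IsRegular ∧ σ0.IsRegular ∧
      μ < σ1 ∧ σ1 < σ0 ∧ σ0 < κ ∧
      (∃ S1 ⊆ {α : Ordinal | α < κ.ord ∧ α.cof = σ1},
        IsStationaryIn S1 κ.ord ∧ (∀ δ ∈ S1, IsSingCardOrd δ) ∧
        ∀ α < κ.ord, IsWInaccOrd α → ¬ IsStationaryIn (S1 ∩ Set.Iio α) α) ∧
      (∃ S0 ⊆ {α : Ordinal | α < κ.ord ∧ α.cof = σ0},
        IsStationaryIn S0 κ.ord ∧ (∀ δ ∈ S0, IsSingCardOrd δ) ∧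
        ∀ α < κ.ord, IsWInaccOrd α → ¬ IsStationaryIn (S0 ∩ Set.Iio α) α) :=
  stmt18_general κ χ μ hreg hunc hlim hμ hrefl hT

end Paper
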